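/- Let m ≥ 1 and k ≥ 1, let D_t ⊆ ℂ^k be a closed and bounded set, let a_0, …, a_{m−1} : D_t → ℂ be continuous functions, write a(t) = (a_0(t), …, a_{m−1}(t)) ∈ ℂ^m, and suppose Λ̄_m(a(t)) < 0 for every t ∈ D_t. Let D_w ⊆ ℂ^m be a bounded set. Then there exist C̃ ≥ 0 and κ > 0 such that for every t ∈ D_t, every N ∈ D_w, and every solution w of the Cauchy problem with coefficients a(t) and initial data N, one has |w^{(i)}(ξ)| ≤ C̃ (1 + ξ^{m−1}) e^{−κ ξ} for all i ∈ {0, …, m−1} and all ξ ≥ 0. -/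

import Mathlib

open Polynomial

/-- The characteristic polynomial `λ^m - a_{m-1} λ^{m-1} - ⋯ - a_1 λ - a_0`. -/
noncomputable def charPoly (m : ℕ) (M : Fin m → ℂ) : Polynomial ℂ :=
  X ^ m - ∑ j : Fin m, C (M j) * X ^ (j : ℕ)

/-- `Λ̄_m(M)`: the maximum of the real parts of the roots of `charPoly m M`. -/
noncomputable def maxReRoots (m : ℕ) (M : Fin m → ℂ) : ℝ :=
  sSup (Complex.re '' {z : ℂ | z ∈ (charPoly m M).roots})

/-- `w` is a solution of the Cauchy problem with coefficients `M` and initial data `N`. -/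
def IsCauchySolution (m : ℕ) (M N : Fin m → ℂ) (w : ℝ → ℂ) : Prop :=
  (∀ i < m, Differentiable ℝ (iteratedDeriv i w)) ∧
  (∀ ξ : ℝ, 0 ≤ ξ → iteratedDeriv m w ξ = ∑ j : Fin m, M j * iteratedDeriv (j : ℕ) w ξ) ∧
  (∀ j : Fin m, iteratedDeriv (j : ℕ) w 0 = N j)

/-!
Factor the characteristic polynomial as `∏ i, (X - z i)` and put `u j = (∏ i < j, (D - z i)) w`.
Then `u m = 0` on `[0, ∞)` and `u j' = z j * u j + u (j + 1)`; since `Re (z j) ≤ -κ`, the mean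
value inequality applied to `s ↦ exp (z j * (x - s)) * u j s` bounds `u (m - 1), u (m - 2), …` in
turn by `C (1 + x) ^ k * exp (-κ x)`. As `∏ i < r, (X - z i)` is monic of degree `r`, `w^(r)` is
recovered from `u r` and the lower derivatives. All constants depend only on bounds for the roots
and the initial data; compactness of `{(t, z) | t ∈ D_t, z a root of P(a(t))}` provides a uniform
root bound and a uniform `κ > 0`.
-/

open Set

noncomputable def prodXSubC {K : Type*} [CommRing K] (s : Multiset K) : K[X] :=
  (s.map fun z => X - C z).prod

section ProdXSubC

variable {K : Type*}

theorem monic_prodXSubC [CommRing K] (s : Multiset K) : (prodXSubC s).Monic :=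
  monic_multiset_prod_of_monic _ _ fun z _ => monic_X_sub_C z

theorem natDegree_prodXSubC [CommRing K] [Nontrivial K] (s : Multiset K) :
    (prodXSubC s).natDegree = Multiset.card s :=
  natDegree_multiset_prod_X_sub_C_eq_card s

theorem prodXSubC_take_add_one [CommRing K] (ℓ : List K) {j : ℕ} (hj : j < ℓ.length) :
    prodXSubC (ℓ.take (j + 1) : Multiset K) = prodXSubC (ℓ.take j : Multiset K) * (X - C ℓ[j]) := by
  rw [List.take_add_one, List.getElem?_eq_getElem hj, Option.toList_some, ← Multiset.coe_add]
  simp [prodXSubC]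

theorem norm_coeff_prodXSubC_le [NormedField K] {s : Multiset K} {R : ℝ} {d : ℕ}
    (hR : ∀ z ∈ s, ‖z‖ ≤ R) (hd : Multiset.card s ≤ d) (i : ℕ) :
    ‖(prodXSubC s).coeff i‖ ≤ max R 1 ^ d * d.choose (d / 2) := by
  have h := coeff_bdd_of_roots_le (d := d) (RingHom.id K) (monic_prodXSubC s)
    (by rw [map_id]; exact Splits.multisetProd (by simp [Splits.X_sub_C]))
    (by rwa [natDegree_prodXSubC])
    (by rw [map_id, prodXSubC, roots_multiset_prod_X_sub_C]; exact hR) i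
  rwa [map_id] at h

end ProdXSubC

theorem monic_charPoly (m : ℕ) (M : Fin m → ℂ) : (charPoly m M).Monic :=
  monic_X_pow_sub (degree_sum_fin_lt M)

theorem natDegree_charPoly (m : ℕ) (M : Fin m → ℂ) : (charPoly m M).natDegree = m := by
  refine natDegree_eq_of_degree_eq_some ?_
  rw [charPoly, degree_sub_eq_left_of_degree_lt] <;> rw [degree_X_pow]
  exact degree_sum_fin_lt M

theorem prodXSubC_roots_charPoly (m : ℕ) (M : Fin m → ℂ) :
    prodXSubC (charPoly m M).roots = charPoly m M :=
  ((IsAlgClosed.splits _).eq_prod_roots_of_monic (monic_charPoly m M)).symm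

theorem card_roots_charPoly (m : ℕ) (M : Fin m → ℂ) : Multiset.card (charPoly m M).roots = m := by
  rw [splits_iff_card_roots.mp (IsAlgClosed.splits _), natDegree_charPoly]

theorem coeff_charPoly_of_lt (m : ℕ) (M : Fin m → ℂ) {i : ℕ} (hi : i < m) :
    (charPoly m M).coeff i = -M ⟨i, hi⟩ := by
  simp only [charPoly, coeff_sub, coeff_X_pow, hi.ne, if_false, finsetSum_coeff, coeff_C_mul_X_pow,
    zero_sub, neg_inj]
  rw [Finset.sum_eq_single_of_mem ⟨i, hi⟩ (Finset.mem_univ _)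
    fun j _ hj => if_neg fun h => hj (Fin.ext h.symm)]
  exact if_pos rfl

theorem eval_charPoly (m : ℕ) (M : Fin m → ℂ) (z : ℂ) :
    (charPoly m M).eval z = z ^ m - ∑ j : Fin m, M j * z ^ (j : ℕ) := by
  simp [charPoly, eval_finsetSum]

theorem norm_lt_of_mem_roots_charPoly (m : ℕ) (M : Fin m → ℂ) {z : ℂ}
    (hz : z ∈ (charPoly m M).roots) : ‖z‖ < ∑ j, ‖M j‖ + 1 := by
  have h := IsRoot.norm_lt_cauchyBound (monic_charPoly m M).ne_zero (isRoot_of_mem_roots hz)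
  have hsup : (Finset.range (charPoly m M).natDegree).sup (‖(charPoly m M).coeff ·‖₊)
      ≤ ∑ j, ‖M j‖₊ := by
    refine Finset.sup_le fun i hi => ?_
    rw [natDegree_charPoly, Finset.mem_range] at hi
    rw [coeff_charPoly_of_lt m M hi, nnnorm_neg]
    exact Finset.single_le_sum (f := fun j => ‖M j‖₊) (fun _ _ => by positivity) (Finset.mem_univ _)
  rw [cauchyBound, (monic_charPoly m M).leadingCoeff, nnnorm_one, div_one] at h
  have : ‖z‖₊ < ∑ j, ‖M j‖₊ + 1 := h.trans_le (by gcongr)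
  have := NNReal.coe_lt_coe.mpr this
  push_cast at this
  exact this

theorem re_le_maxReRoots (m : ℕ) (M : Fin m → ℂ) {z : ℂ} (hz : z ∈ (charPoly m M).roots) :
    z.re ≤ maxReRoots m M :=
  le_csSup (((charPoly m M).roots.finite_toSet).image _).bddAbove ⟨z, hz, rfl⟩

section LinearFunctional

variable {𝕜 E : Type*} [NormedField 𝕜] [SeminormedAddCommGroup E] [NormedSpace 𝕜 E]

theorem map_eq_sum_coeff_smul (φ : 𝕜[X] →ₗ[𝕜] E) (p : 𝕜[X]) :
    φ p = ∑ i ∈ Finset.range (p.natDegree + 1), p.coeff i • φ (X ^ i) := by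
  conv_lhs => rw [p.as_sum_range_C_mul_X_pow]
  simp only [map_sum, ← smul_eq_C_mul, map_smul]

theorem norm_map_le_of_coeff_le (φ : 𝕜[X] →ₗ[𝕜] E) (p : 𝕜[X]) {B Y : ℝ}
    (hB : ∀ i, ‖p.coeff i‖ ≤ B) (hY : ∀ i ≤ p.natDegree, ‖φ (X ^ i)‖ ≤ Y) :
    ‖φ p‖ ≤ (p.natDegree + 1) * (B * Y) := by
  rw [map_eq_sum_coeff_smul]
  refine (norm_sum_le _ _).trans ?_
  have hY0 : 0 ≤ Y := (norm_nonneg _).trans (hY 0 (Nat.zero_le _))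
  calc ∑ i ∈ Finset.range (p.natDegree + 1), ‖p.coeff i • φ (X ^ i)‖
      ≤ ∑ _i ∈ Finset.range (p.natDegree + 1), B * Y := by
        refine Finset.sum_le_sum fun i hi => ?_
        rw [norm_smul]
        exact mul_le_mul (hB i) (hY i (Nat.lt_succ_iff.mp (Finset.mem_range.mp hi)))
          (norm_nonneg _) ((norm_nonneg _).trans (hB i))
    _ = (p.natDegree + 1) * (B * Y) := by simp

/-- Triangular inversion: `X ^ r` is `P r` minus lower powers with coefficients bounded by `B`. -/
theorem norm_map_X_pow_le_of_monic (φ : 𝕜[X] →ₗ[𝕜] E) {P : ℕ → 𝕜[X]} {n : ℕ} {A B : ℝ}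
    (hP : ∀ r < n, (P r).Monic ∧ (P r).natDegree = r) (hB : ∀ r < n, ∀ i, ‖(P r).coeff i‖ ≤ B)
    (hA : ∀ r < n, ‖φ (P r)‖ ≤ A) : ∀ r < n, ‖φ (X ^ r)‖ ≤ A * (1 + B) ^ r := by
  intro r
  induction r using Nat.strong_induction_on with
  | _ r ih =>
    intro hr
    obtain ⟨hmonic, hdeg⟩ := hP r hr
    have hB0 : 0 ≤ B := (norm_nonneg _).trans (hB r hr 0)
    have hexpand : φ (X ^ r) = φ (P r) - ∑ i ∈ Finset.range r, (P r).coeff i • φ (X ^ i) := by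
      conv_rhs => arg 1; rw [hmonic.as_sum, hdeg]
      simp only [map_add, map_sum, ← smul_eq_C_mul, map_smul, add_sub_cancel_right]
    have hlower : ‖∑ i ∈ Finset.range r, (P r).coeff i • φ (X ^ i)‖
        ≤ ∑ i ∈ Finset.range r, B * (A * (1 + B) ^ i) := by
      refine (norm_sum_le _ _).trans (Finset.sum_le_sum fun i hi => ?_)
      have hi := Finset.mem_range.mp hi
      rw [norm_smul]
      exact mul_le_mul (hB r hr i) (ih i hi (hi.trans hr)) (norm_nonneg _) hB0
    have hgeom : ∑ i ∈ Finset.range r, B * (A * (1 + B) ^ i) = A * ((1 + B) ^ r - 1) := by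
      rw [← geom_sum_mul, Finset.sum_mul, Finset.mul_sum]
      exact Finset.sum_congr rfl fun i _ => by ring
    calc ‖φ (X ^ r)‖ ≤ ‖φ (P r)‖ + ‖∑ i ∈ Finset.range r, (P r).coeff i • φ (X ^ i)‖ := by
          rw [hexpand]; exact norm_sub_le _ _
      _ ≤ A + A * ((1 + B) ^ r - 1) := by rw [← hgeom]; exact add_le_add (hA r hr) hlower
      _ = A * (1 + B) ^ r := by ring

end LinearFunctional

/-- `diffOp w ξ p` is `(p(d/dξ) w)(ξ)`. -/
noncomputable def diffOp (w : ℝ → ℂ) (ξ : ℝ) : ℂ[X] →ₗ[ℂ] ℂ :=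
  lsum fun j => LinearMap.toSpanSingleton ℂ ℂ (iteratedDeriv j w ξ)

@[simp]
theorem diffOp_X_pow (w : ℝ → ℂ) (ξ : ℝ) (j : ℕ) : diffOp w ξ (X ^ j) = iteratedDeriv j w ξ := by
  rw [diffOp, lsum_apply, ← monomial_one_right_eq_X_pow, sum_monomial_index _ _ (by simp)]
  simp

theorem diffOp_charPoly (m : ℕ) (M : Fin m → ℂ) (w : ℝ → ℂ) (ξ : ℝ) :
    diffOp w ξ (charPoly m M) = iteratedDeriv m w ξ - ∑ j : Fin m, M j * iteratedDeriv j w ξ := by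
  simp only [charPoly, map_sub, map_sum, ← smul_eq_C_mul, map_smul, diffOp_X_pow, smul_eq_mul]

theorem hasDerivAt_diffOp {w : ℝ → ℂ} {p : ℂ[X]} {ξ : ℝ}
    (hw : ∀ i ≤ p.natDegree, DifferentiableAt ℝ (iteratedDeriv i w) ξ) :
    HasDerivAt (fun x => diffOp w x p) (diffOp w ξ (X * p)) ξ := by
  have hsum : ∀ x, diffOp w x p =
      ∑ i ∈ Finset.range (p.natDegree + 1), p.coeff i * iteratedDeriv i w x := by
    intro x; rw [map_eq_sum_coeff_smul]; simp only [diffOp_X_pow, smul_eq_mul]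
  have hXp : diffOp w ξ (X * p) =
      ∑ i ∈ Finset.range (p.natDegree + 1), p.coeff i * iteratedDeriv (i + 1) w ξ := by
    conv_lhs => rw [p.as_sum_range_C_mul_X_pow]
    simp only [Finset.mul_sum, map_sum]
    refine Finset.sum_congr rfl fun i _ => ?_
    rw [mul_left_comm, ← pow_succ', ← smul_eq_C_mul, map_smul, diffOp_X_pow, smul_eq_mul]
  simp only [hsum, hXp]
  refine HasDerivAt.fun_sum fun i hi => HasDerivAt.const_mul _ ?_
  rw [iteratedDeriv_succ]
  exact (hw i (Nat.lt_succ_iff.mp (Finset.mem_range.mp hi))).hasDerivAt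

theorem norm_cexp_mul_ofReal_le {μ : ℂ} {κ y : ℝ} (hμ : μ.re ≤ -κ) (hy : 0 ≤ y) :
    ‖Complex.exp (μ * y)‖ ≤ Real.exp (-κ * y) := by
  rw [Complex.norm_exp, Complex.re_mul_ofReal]
  exact Real.exp_le_exp.mpr (mul_le_mul_of_nonneg_right hμ hy)

/-- Mean value inequality for `s ↦ exp (μ (x - s)) v s`, whose derivative `exp (μ (x - s)) g s`
has norm at most `B exp (-κ x)` on `[0, x]`. -/
theorem norm_le_of_hasDerivAt_eq_mul_add {v g : ℝ → ℂ} {μ : ℂ} {κ B x : ℝ} (hx : 0 ≤ x)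
    (hμ : μ.re ≤ -κ) (hv : ∀ s ∈ Icc 0 x, HasDerivAt v (μ * v s + g s) s)
    (hg : ∀ s ∈ Icc 0 x, ‖g s‖ ≤ B * Real.exp (-κ * s)) :
    ‖v x‖ ≤ (‖v 0‖ + B * x) * Real.exp (-κ * x) := by
  set f : ℝ → ℂ := fun s => Complex.exp (μ * (x - s)) * v s
  have hf : ∀ s ∈ Icc 0 x, HasDerivAt f (Complex.exp (μ * (x - s)) * g s) s := by
    intro s hs
    have hlin : HasDerivAt (fun s : ℝ => μ * ((x : ℂ) - s)) (-μ) s := by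
      simpa using ((hasDerivAt_id (s : ℂ)).const_sub (x : ℂ)).const_mul μ |>.comp_ofReal
    exact (hlin.cexp.fun_mul (hv s hs)).congr_deriv (by ring)
  have hbound : ∀ s ∈ Ico 0 x, ‖Complex.exp (μ * (x - s)) * g s‖ ≤ B * Real.exp (-κ * x) := by
    intro s ⟨hs0, hsx⟩
    have hexp := norm_cexp_mul_ofReal_le hμ (sub_nonneg.mpr hsx.le)
    push_cast at hexp
    calc ‖Complex.exp (μ * (x - s)) * g s‖
        ≤ Real.exp (-κ * (x - s)) * (B * Real.exp (-κ * s)) := by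
          rw [norm_mul]
          exact mul_le_mul hexp (hg s ⟨hs0, hsx.le⟩) (norm_nonneg _) (Real.exp_nonneg _)
      _ = B * Real.exp (-κ * x) := by rw [mul_left_comm, ← Real.exp_add]; ring_nf
  have hmvt := norm_image_sub_le_of_norm_deriv_le_segment'
    (fun s hs => (hf s hs).hasDerivWithinAt) hbound x ⟨hx, le_rfl⟩
  have hfx : f x = v x := by simp [f]
  have hf0 : ‖f 0‖ ≤ ‖v 0‖ * Real.exp (-κ * x) := by
    simp only [f, Complex.ofReal_zero, sub_zero, norm_mul]
    rw [mul_comm]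
    exact mul_le_mul_of_nonneg_left (norm_cexp_mul_ofReal_le hμ hx) (norm_nonneg _)
  calc ‖v x‖ ≤ ‖f 0‖ + ‖f x - f 0‖ := by rw [← hfx]; exact norm_le_insert' _ _
    _ ≤ ‖v 0‖ * Real.exp (-κ * x) + B * Real.exp (-κ * x) * (x - 0) := add_le_add hf0 hmvt
    _ = (‖v 0‖ + B * x) * Real.exp (-κ * x) := by ring

theorem norm_le_of_hasDerivAt_cascade {u : ℕ → ℝ → ℂ} {z : ℕ → ℂ} {n : ℕ} {κ C₀ : ℝ}
    (hz : ∀ j < n, (z j).re ≤ -κ)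
    (hu : ∀ j < n, ∀ s, 0 ≤ s → HasDerivAt (u j) (z j * u j s + u (j + 1) s) s)
    (hlast : ∀ s, 0 ≤ s → u n s = 0) (hinit : ∀ j < n, ‖u j 0‖ ≤ C₀) :
    ∀ k j, j + k + 1 = n → ∀ x, 0 ≤ x →
      ‖u j x‖ ≤ (k + 1) * C₀ * (1 + x) ^ k * Real.exp (-κ * x) := by
  intro k
  induction k with
  | zero =>
    intro j hj x hx
    have h := norm_le_of_hasDerivAt_eq_mul_add (B := 0) hx (hz j (by omega))
      (fun s hs => hu j (by omega) s hs.1) (fun s hs => by simp [hj, hlast s hs.1])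
    rw [zero_mul, add_zero] at h
    simpa using h.trans (mul_le_mul_of_nonneg_right (hinit j (by omega)) (Real.exp_nonneg _))
  | succ k ih =>
    intro j hj x hx
    have hC₀ : 0 ≤ C₀ := (norm_nonneg _).trans (hinit j (by omega))
    have hnext : ∀ s ∈ Icc 0 x,
        ‖u (j + 1) s‖ ≤ ((k + 1) * C₀ * (1 + x) ^ k) * Real.exp (-κ * s) := by
      intro s ⟨hs0, hsx⟩
      refine (ih (j + 1) (by omega) s hs0).trans ?_
      gcongr
    have h := norm_le_of_hasDerivAt_eq_mul_add hx (hz j (by omega))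
      (fun s hs => hu j (by omega) s hs.1) hnext
    have h1 : (1 : ℝ) ≤ (1 + x) ^ (k + 1) := one_le_pow₀ (by linarith)
    have h2 : x * (1 + x) ^ k ≤ (1 + x) ^ (k + 1) := by
      rw [pow_succ']; exact mul_le_mul_of_nonneg_right (by linarith) (by positivity)
    refine h.trans (mul_le_mul_of_nonneg_right ?_ (Real.exp_nonneg _))
    push_cast
    nlinarith [hinit j (by omega), mul_le_mul_of_nonneg_left h2 (by positivity : 0 ≤ (k + 1) * C₀),
      mul_le_mul_of_nonneg_left h1 hC₀]

theorem hasDerivAt_diffOp_prodXSubC_take {ℓ : List ℂ} {w : ℝ → ℂ}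
    (hw : ∀ i < ℓ.length, Differentiable ℝ (iteratedDeriv i w)) {j : ℕ} (hj : j < ℓ.length)
    (ξ : ℝ) :
    HasDerivAt (fun x => diffOp w x (prodXSubC (ℓ.take j : Multiset ℂ)))
      (ℓ[j] * diffOp w ξ (prodXSubC (ℓ.take j : Multiset ℂ))
        + diffOp w ξ (prodXSubC (ℓ.take (j + 1) : Multiset ℂ))) ξ := by
  have hdeg : (prodXSubC (ℓ.take j : Multiset ℂ)).natDegree = j := by
    rw [natDegree_prodXSubC, Multiset.coe_card, List.length_take, min_eq_left hj.le]
  have hX : X * prodXSubC (ℓ.take j : Multiset ℂ)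
      = C ℓ[j] * prodXSubC (ℓ.take j : Multiset ℂ) + prodXSubC (ℓ.take (j + 1) : Multiset ℂ) := by
    rw [prodXSubC_take_add_one ℓ hj]; ring
  convert hasDerivAt_diffOp (p := prodXSubC (ℓ.take j : Multiset ℂ))
    (fun i hi => (hw i (by omega)).differentiableAt) using 1
  rw [hX, map_add, ← smul_eq_C_mul, map_smul, smul_eq_mul]

theorem exists_norm_iteratedDeriv_le (n : ℕ) (κ R Cw : ℝ) (hCw : 0 ≤ Cw) :
    ∃ K, 0 ≤ K ∧ ∀ s : Multiset ℂ, Multiset.card s = n → (∀ z ∈ s, z.re ≤ -κ ∧ ‖z‖ ≤ R) →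
      ∀ w : ℝ → ℂ, (∀ i < n, Differentiable ℝ (iteratedDeriv i w)) →
        (∀ ξ, 0 ≤ ξ → diffOp w ξ (prodXSubC s) = 0) → (∀ i < n, ‖iteratedDeriv i w 0‖ ≤ Cw) →
          ∀ r < n, ∀ ξ, 0 ≤ ξ →
            ‖iteratedDeriv r w ξ‖ ≤ K * (1 + ξ) ^ (n - 1) * Real.exp (-κ * ξ) := by
  set B : ℝ := max R 1 ^ n * n.choose (n / 2)
  have hB : 0 ≤ B := by positivity
  refine ⟨n * (n * (B * Cw)) * (1 + B) ^ n, by positivity, ?_⟩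
  intro s hs hroots w hw hode hinit r hr ξ hξ
  set ℓ := s.toList
  have hlen : ℓ.length = n := by rw [Multiset.length_toList, hs]
  set q : ℕ → ℂ[X] := fun j => prodXSubC (ℓ.take j : Multiset ℂ)
  have hq : ∀ j ≤ n, (q j).Monic ∧ (q j).natDegree = j := fun j hj =>
    ⟨monic_prodXSubC _, by simp [q, natDegree_prodXSubC, hlen, hj]⟩
  have hcoeff : ∀ j i, ‖(q j).coeff i‖ ≤ B := fun j =>
    norm_coeff_prodXSubC_le (fun z hz => (hroots z (Multiset.mem_toList.mp
      (List.mem_of_mem_take (Multiset.mem_coe.mp hz)))).2) (by simp [hlen])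
  have hqn : q n = prodXSubC s := by
    simp only [q]; rw [← hlen, List.take_length, Multiset.coe_toList]
  have hinitq : ∀ j < n, ‖diffOp w 0 (q j)‖ ≤ n * (B * Cw) := fun j hj =>
    (norm_map_le_of_coeff_le _ _ (hcoeff j) fun i hi => by
      simpa using hinit i (by rw [(hq j hj.le).2] at hi; omega)).trans
      (by rw [(hq j hj.le).2]; gcongr; norm_cast)
  have hcascade := norm_le_of_hasDerivAt_cascade (u := fun j x => diffOp w x (q j))
    (z := fun j => ℓ.getD j 0)
    (fun j hj => by
      rw [List.getD_eq_getElem _ _ (hlen ▸ hj)]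
      exact (hroots _ (Multiset.mem_toList.mp (List.getElem_mem _))).1)
    (fun j hj x _ => by
      rw [List.getD_eq_getElem _ _ (hlen ▸ hj)]
      exact hasDerivAt_diffOp_prodXSubC_take (hlen ▸ hw) (hlen ▸ hj) x)
    (fun x hx => by simp only [hqn, hode x hx]) hinitq
  set A : ℝ := n * (n * (B * Cw)) * ((1 + ξ) ^ (n - 1) * Real.exp (-κ * ξ))
  have hu : ∀ j < n, ‖diffOp w ξ (q j)‖ ≤ A := fun j hj =>
    calc ‖diffOp w ξ (q j)‖
        ≤ ((n - 1 - j : ℕ) + 1) * (n * (B * Cw)) * (1 + ξ) ^ (n - 1 - j) * Real.exp (-κ * ξ) :=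
          hcascade (n - 1 - j) j (by omega) ξ hξ
      _ ≤ n * (n * (B * Cw)) * (1 + ξ) ^ (n - 1) * Real.exp (-κ * ξ) := by
          gcongr ?_ * _ * ?_ * _
          · exact_mod_cast (by omega : n - 1 - j + 1 ≤ n)
          · exact pow_le_pow_right₀ (by linarith) (by omega)
      _ = A := by ring
  have hr' := norm_map_X_pow_le_of_monic (diffOp w ξ) (fun j hj => hq j hj.le)
    (fun j _ => hcoeff j) hu r hr
  rw [diffOp_X_pow] at hr'
  calc ‖iteratedDeriv r w ξ‖ ≤ A * (1 + B) ^ r := hr'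
    _ ≤ A * (1 + B) ^ n := by gcongr; linarith
    _ = _ := by ring

section Parametric

variable {m k : ℕ} {Dt : Set (Fin k → ℂ)} {a : (Fin k → ℂ) → (Fin m → ℂ)}

theorem exists_norm_le_of_mem_roots_charPoly (hDt : IsCompact Dt)
    (ha : ∀ j : Fin m, ContinuousOn (fun t => a t j) Dt) :
    ∃ R, ∀ t ∈ Dt, ∀ z ∈ (charPoly m (a t)).roots, ‖z‖ ≤ R := by
  obtain ⟨C, hC⟩ := hDt.exists_bound_of_continuousOn
    (continuousOn_finsetSum Finset.univ fun j _ => (ha j).norm)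
  refine ⟨C + 1, fun t ht z hz => (norm_lt_of_mem_roots_charPoly m (a t) hz).le.trans ?_⟩
  linarith [(le_abs_self _).trans (hC t ht)]

/-- The pairs `(t, z)` with `z` a root of `charPoly m (a t)` form a compact set, on which
`-Re z` is positive and continuous. -/
theorem exists_pos_re_le_neg_of_mem_roots_charPoly (hDt : IsCompact Dt)
    (ha : ∀ j : Fin m, ContinuousOn (fun t => a t j) Dt)
    (hneg : ∀ t ∈ Dt, maxReRoots m (a t) < 0) :
    ∃ κ, 0 < κ ∧ ∀ t ∈ Dt, ∀ z ∈ (charPoly m (a t)).roots, z.re ≤ -κ := by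
  obtain ⟨R, hR⟩ := exists_norm_le_of_mem_roots_charPoly hDt ha
  set S := Dt ×ˢ Metric.closedBall (0 : ℂ) R
  set f : (Fin k → ℂ) × ℂ → ℂ := fun p => (charPoly m (a p.1)).eval p.2
  have hf : ContinuousOn f S := by
    simp only [f, eval_charPoly]
    exact (continuous_snd.pow m).continuousOn.sub (continuousOn_finsetSum _ fun j _ =>
      ((ha j).comp continuous_fst.continuousOn fun p hp => hp.1).mul
        (continuous_snd.pow _).continuousOn)
  have hS : IsCompact S := hDt.prod (isCompact_closedBall 0 R)
  have hK : IsCompact (S ∩ f ⁻¹' {0}) :=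
    hS.of_isClosed_subset (hf.preimage_isClosed_of_isClosed hS.isClosed isClosed_singleton)
      inter_subset_left
  have hmem : ∀ t ∈ Dt, ∀ z ∈ (charPoly m (a t)).roots, (t, z) ∈ S ∩ f ⁻¹' {0} :=
    fun t ht z hz => ⟨⟨ht, mem_closedBall_zero_iff.mpr (hR t ht z hz)⟩, isRoot_of_mem_roots hz⟩
  obtain ⟨κ, hκ, hκle⟩ := hK.exists_forall_le' (f := fun p => -p.2.re)
    (Complex.continuous_re.comp continuous_snd).neg.continuousOn (a := 0) fun p ⟨⟨ht, _⟩, hp⟩ =>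
      neg_pos.mpr ((re_le_maxReRoots m _
        (mem_roots'.mpr ⟨(monic_charPoly m _).ne_zero, hp⟩)).trans_lt (hneg p.1 ht))
  exact ⟨κ, hκ, fun t ht z hz => le_neg.mpr (hκle _ (hmem t ht z hz))⟩

end Parametric

theorem uniform_exp_decay_estimate_param_general (m k : ℕ)
    (Dt : Set (Fin k → ℂ)) (hDtClosed : IsClosed Dt) (hDtBdd : Bornology.IsBounded Dt)
    (a : (Fin k → ℂ) → (Fin m → ℂ))
    (ha : ∀ j : Fin m, ContinuousOn (fun t => a t j) Dt)
    (hneg : ∀ t ∈ Dt, maxReRoots m (a t) < 0)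
    (Dw : Set (Fin m → ℂ)) (hDwBdd : Bornology.IsBounded Dw) :
    ∃ Ct : ℝ, 0 ≤ Ct ∧ ∃ κ : ℝ, 0 < κ ∧
      ∀ t ∈ Dt, ∀ N ∈ Dw,
        ∀ w : ℝ → ℂ, IsCauchySolution m (a t) N w →
          ∀ i < m, ∀ ξ : ℝ, 0 ≤ ξ →
            ‖iteratedDeriv i w ξ‖ ≤ Ct * (1 + ξ ^ (m - 1)) * Real.exp (-κ * ξ) := by
  have hDt : IsCompact Dt := Metric.isCompact_of_isClosed_isBounded hDtClosed hDtBdd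
  obtain ⟨R, hR⟩ := exists_norm_le_of_mem_roots_charPoly hDt ha
  obtain ⟨κ, hκ, hre⟩ := exists_pos_re_le_neg_of_mem_roots_charPoly hDt ha hneg
  obtain ⟨Cw, hCw⟩ := hDwBdd.exists_norm_le
  obtain ⟨K, hK, hbound⟩ := exists_norm_iteratedDeriv_le m κ R (max Cw 0) (le_max_right _ _)
  refine ⟨K * 2 ^ (m - 1), by positivity, κ, hκ, ?_⟩
  rintro t ht N hN w ⟨hdiff, hode, hinit⟩ i hi ξ hξ
  have hdecay := hbound _ (card_roots_charPoly m (a t)) (fun z hz => ⟨hre t ht z hz, hR t ht z hz⟩)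
    w hdiff (fun x hx => by rw [prodXSubC_roots_charPoly, diffOp_charPoly, hode x hx, sub_self])
    (fun j hj => (hinit ⟨j, hj⟩).symm ▸ (norm_le_pi_norm N _).trans ((hCw N hN).trans
      (le_max_left _ _))) i hi ξ hξ
  calc ‖iteratedDeriv i w ξ‖ ≤ K * (1 + ξ) ^ (m - 1) * Real.exp (-κ * ξ) := hdecay
    _ ≤ K * (2 ^ (m - 1 - 1) * (1 ^ (m - 1) + ξ ^ (m - 1))) * Real.exp (-κ * ξ) := by
        gcongr; exact add_pow_le zero_le_one hξ _
    _ ≤ K * 2 ^ (m - 1) * (1 + ξ ^ (m - 1)) * Real.exp (-κ * ξ) := by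
        rw [one_pow, ← mul_assoc]; gcongr <;> norm_num

/-- coefficients depending continuously on parameters `t ∈ D_t ⊆ ℂ^k`
(`D_t` closed and bounded) with `Λ̄_m(a(t)) < 0` on `D_t`; then solutions decay like
`C̃ (1 + ξ^{m-1}) e^{-κ ξ}`, uniformly in `t ∈ D_t` and initial data `N ∈ D_w`. -/
theorem uniform_exp_decay_estimate_param (m k : ℕ) (hm : 1 ≤ m) (hk : 1 ≤ k)
    (Dt : Set (Fin k → ℂ)) (hDtClosed : IsClosed Dt) (hDtBdd : Bornology.IsBounded Dt)
    (a : (Fin k → ℂ) → (Fin m → ℂ))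
    (ha : ∀ j : Fin m, ContinuousOn (fun t => a t j) Dt)
    (hneg : ∀ t ∈ Dt, maxReRoots m (a t) < 0)
    (Dw : Set (Fin m → ℂ)) (hDwBdd : Bornology.IsBounded Dw) :
    ∃ Ct : ℝ, 0 ≤ Ct ∧ ∃ κ : ℝ, 0 < κ ∧
      ∀ t ∈ Dt, ∀ N ∈ Dw,
        ∀ w : ℝ → ℂ, IsCauchySolution m (a t) N w →
          ∀ i < m, ∀ ξ : ℝ, 0 ≤ ξ →
            ‖iteratedDeriv i w ξ‖ ≤ Ct * (1 + ξ ^ (m - 1)) * Real.exp (-κ * ξ) :=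
  uniform_exp_decay_estimate_param_general m k Dt hDtClosed hDtBdd a ha hneg Dw hDwBdd
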